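/- arXiv:1603.02605 — 2 statements merged into one kernel-verified Lean document; each statement's English description precedes it below -/
import Mathlib

section
/- If p is a read-once polynomial over a field F (computed by a read-once formula), then for any variable xi, the partial derivative ∂_{xi}(p) := p|_{xi=1} − p|_{xi=0} is also a read-once polynomial. -/
open MvPolynomial

/-- Substitute the constant `a` for variable `i`. -/
noncomputable def rst {F : Type*} [Field F] {n : ℕ} (i : Fin n) (a : F)
    (p : MvPolynomial (Fin n) F) : MvPolynomial (Fin n) F :=
  aeval (fun k : Fin n => if k = i then (C a : MvPolynomial (Fin n) F) else X k) p

/-- Partial derivative of a multilinear polynomial: p|_{xi=1} - p|_{xi=0}. -/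
noncomputable def pder {F : Type*} [Field F] {n : ℕ} (i : Fin n)
    (p : MvPolynomial (Fin n) F) : MvPolynomial (Fin n) F :=
  rst i 1 p - rst i 0 p

/-- Read-once polynomials (including the zero polynomial). -/
inductive IsROP {F : Type*} [Field F] {n : ℕ} : MvPolynomial (Fin n) F → Prop
  | zero : IsROP 0
  | leaf (a b : F) (i : Fin n) : IsROP (C a * X i + C b)
  | add (a b : F) {f g : MvPolynomial (Fin n) F} (hdisj : Disjoint f.vars g.vars)
      (hf : IsROP f) (hg : IsROP g) : IsROP (C a * (f + g) + C b)
  | mul (a b : F) {f g : MvPolynomial (Fin n) F} (hdisj : Disjoint f.vars g.vars)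
      (hf : IsROP f) (hg : IsROP g) : IsROP (C a * (f * g) + C b)

section Aux

variable {F : Type*} [Field F] {n : ℕ}

lemma rst_eq_self {i : Fin n} {p : MvPolynomial (Fin n) F} (h : i ∉ p.vars) (a : F) :
    rst i a p = p := by
  have : rst i a p = aeval X p := by
    unfold rst
    rw [aeval_def, aeval_def]
    exact eval₂Hom_congr' rfl (fun k hk _ => by
      have : k ≠ i := fun hki => h (hki ▸ hk)
      simp [this]) rfl
  rw [this, aeval_X_left_apply]

lemma vars_rst_subset (i : Fin n) (a : F) (p : MvPolynomial (Fin n) F) :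
    (rst i a p).vars ⊆ p.vars := by
  intro j hj
  have : rst i a p = bind₁ (fun k : Fin n => if k = i then (C a : MvPolynomial (Fin n) F) else X k) p := rfl
  rw [this] at hj
  obtain ⟨k, hk, hjk⟩ := mem_vars_bind₁ _ _ hj
  by_cases hki : k = i
  · simp [hki] at hjk
  · simp [hki] at hjk
    exact hjk ▸ hk

lemma pder_eq_zero {i : Fin n} {p : MvPolynomial (Fin n) F} (h : i ∉ p.vars) :
    pder i p = 0 := by
  unfold pder
  rw [rst_eq_self h, rst_eq_self h, sub_self]

lemma vars_pder_subset (i : Fin n) (p : MvPolynomial (Fin n) F) :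
    (pder i p).vars ⊆ p.vars := by
  unfold pder
  intro j hj
  have := vars_sub_subset (p := rst i 1 p) (q := rst i 0 p) hj
  rcases Finset.mem_union.mp this with h | h
  · exact vars_rst_subset i 1 p h
  · exact vars_rst_subset i 0 p h

lemma rst_affine (i : Fin n) (c a b : F) (p : MvPolynomial (Fin n) F) :
    rst i c (C a * p + C b) = C a * rst i c p + C b := by
  unfold rst
  simp [map_add, map_mul, aeval_C, algebraMap_eq]

lemma pder_affine (i : Fin n) (a b : F) (p : MvPolynomial (Fin n) F) :
    pder i (C a * p + C b) = C a * pder i p := by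
  unfold pder
  rw [rst_affine, rst_affine]
  ring

lemma isROP_C (a : F) (i : Fin n) : IsROP (C a : MvPolynomial (Fin n) F) := by
  have := IsROP.leaf (0 : F) a i
  simpa using this

lemma isROP_scale {q : MvPolynomial (Fin n) F} (h : IsROP q) (a b : F) (i₀ : Fin n) :
    IsROP (C a * q + C b) := by
  induction h with
  | zero => simpa using isROP_C b i₀
  | leaf a' b' j =>
    have : C a * (C a' * X j + C b') + C b = C (a * a') * X j + C (a * b' + b) := by
      simp [C_mul, C_add]; ring
    rw [this]; exact IsROP.leaf _ _ _
  | add a' b' hdisj hf hg ih1 ih2 =>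
    rename_i f g
    have : C a * (C a' * (f + g) + C b') + C b = C (a * a') * (f + g) + C (a * b' + b) := by
      simp [C_mul, C_add]; ring
    rw [this]; exact IsROP.add _ _ hdisj hf hg
  | mul a' b' hdisj hf hg ih1 ih2 =>
    rename_i f g
    have : C a * (C a' * (f * g) + C b') + C b = C (a * a') * (f * g) + C (a * b' + b) := by
      simp [C_mul, C_add]; ring
    rw [this]; exact IsROP.mul _ _ hdisj hf hg

lemma isROP_smul {q : MvPolynomial (Fin n) F} (h : IsROP q) (a : F) (i₀ : Fin n) :
    IsROP (C a * q) := by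
  have := isROP_scale h a 0 i₀
  simpa using this

end Aux

theorem stmt11 {F : Type*} [Field F] {n : ℕ} (p : MvPolynomial (Fin n) F)
    (hp : IsROP p) (i : Fin n) : IsROP (pder i p) := by
  induction hp with
  | zero =>
    have : pder i (0 : MvPolynomial (Fin n) F) = 0 := by
      unfold pder rst; simp
    rw [this]; exact IsROP.zero
  | leaf a b j =>
    rw [pder_affine]
    by_cases hji : j = i
    · subst hji
      have : pder j (X j : MvPolynomial (Fin n) F) = 1 := by
        unfold pder rst; simp
      rw [this, mul_one]
      exact isROP_C a j
    · have hj : i ∉ (X j : MvPolynomial (Fin n) F).vars := by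
        rw [vars_X]
        simp [Ne.symm hji]
      rw [pder_eq_zero hj, mul_zero]
      exact IsROP.zero
  | add a b hdisj hf hg ihf ihg =>
    rw [pder_affine]
    rename_i f g
    by_cases hif : i ∈ f.vars
    · have hig : i ∉ g.vars := fun hig => (Finset.disjoint_left.mp hdisj hif) hig
      have : pder i (f + g) = pder i f := by
        unfold pder
        rw [show rst i 1 (f + g) = rst i 1 f + rst i 1 g from map_add _ _ _,
            show rst i 0 (f + g) = rst i 0 f + rst i 0 g from map_add _ _ _,
            rst_eq_self hig, rst_eq_self hig]
        ring
      rw [this]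
      exact isROP_smul ihf a i
    · have : pder i (f + g) = pder i g := by
        unfold pder
        rw [show rst i 1 (f + g) = rst i 1 f + rst i 1 g from map_add _ _ _,
            show rst i 0 (f + g) = rst i 0 f + rst i 0 g from map_add _ _ _,
            rst_eq_self hif, rst_eq_self hif]
        ring
      rw [this]
      exact isROP_smul ihg a i
  | mul a b hdisj hf hg ihf ihg =>
    rw [pder_affine]
    rename_i f g
    by_cases hif : i ∈ f.vars
    · have hig : i ∉ g.vars := fun hig => (Finset.disjoint_left.mp hdisj hif) hig
      have : pder i (f * g) = pder i f * g := by
        unfold pder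
        rw [show rst i 1 (f * g) = rst i 1 f * rst i 1 g from map_mul _ _ _,
            show rst i 0 (f * g) = rst i 0 f * rst i 0 g from map_mul _ _ _,
            rst_eq_self hig, rst_eq_self hig]
        ring
      rw [this]
      have hd : Disjoint (pder i f).vars g.vars :=
        Finset.disjoint_left.mpr fun j hj => Finset.disjoint_left.mp hdisj (vars_pder_subset i f hj)
      have := IsROP.mul a 0 hd ihf hg
      simpa using this
    · have : pder i (f * g) = f * pder i g := by
        unfold pder
        rw [show rst i 1 (f * g) = rst i 1 f * rst i 1 g from map_mul _ _ _,
            show rst i 0 (f * g) = rst i 0 f * rst i 0 g from map_mul _ _ _,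
            rst_eq_self hif, rst_eq_self hif]
        ring
      rw [this]
      have hd : Disjoint f.vars (pder i g).vars :=
        Finset.disjoint_right.mpr fun j hj => Finset.disjoint_right.mp hdisj (vars_pder_subset i g hj)
      have := IsROP.mul a 0 hd hf ihg
      simpa using this
end

section
/- Let g be a multiplicative read-once polynomial (an ROP computed by a read-once formula with no addition gates) depending on at least 2 variables over a field F. Then for every variable xi of g, there exist a variable xj of g with j ≠ i and a constant γ ∈ F such that ∂_{xj}(g)|_{xi=γ} = 0. -/
open MvPolynomial

/-- Multiplicative read-once polynomials. -/
inductive IsMulROP {F : Type*} [Field F] {n : ℕ} : MvPolynomial (Fin n) F → Prop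
  | leaf (a b : F) (ha : a ≠ 0) (i : Fin n) : IsMulROP (C a * X i + C b)
  | mul (a b : F) (ha : a ≠ 0) {f g : MvPolynomial (Fin n) F} (hdisj : Disjoint f.vars g.vars)
      (hf : IsMulROP f) (hg : IsMulROP g) : IsMulROP (C a * (f * g) + C b)

/-!
Induct on the formula. At a node `a·(f·g) + b` with `xᵢ` read in `f`, either the induction
hypothesis already gives `xⱼ` and `γ` inside `f`, and they work for the node because `∂ⱼ`
passes through the factor `g`; or `f` is the leaf `a'·xᵢ + b'`, and then any variable `xⱼ`
of `g` works with `γ = -b'/a'`, since `∂ⱼ` of the node is a multiple of `f`, which vanishes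
at `xᵢ = γ`.
-/

theorem MvPolynomial.vars_mul_of_ne_zero {R σ : Type*} [CommSemiring R] [NoZeroDivisors R]
    [DecidableEq σ] {p q : MvPolynomial σ R} (hp : p ≠ 0) (hq : q ≠ 0) :
    (p * q).vars = p.vars ∪ q.vars := by
  ext k
  simp only [Finset.mem_union, mem_vars_iff_degreeOf_ne_zero, degreeOf_mul_eq hp hq]
  omega

theorem MvPolynomial.vars_C_mul_add_C {R σ : Type*} [CommRing R] [NoZeroDivisors R] {a : R}
    (ha : a ≠ 0) (b : R) (p : MvPolynomial σ R) : (C a * p + C b).vars = p.vars := by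
  classical
  rw [vars_add_of_disjoint (by simp), vars_C, Finset.union_empty, vars_C_mul a ha]

section

variable {F : Type*} [Field F] {n : ℕ}

@[simp]
theorem rst_add (i : Fin n) (γ : F) (p q : MvPolynomial (Fin n) F) :
    rst i γ (p + q) = rst i γ p + rst i γ q := map_add _ _ _

@[simp]
theorem rst_mul (i : Fin n) (γ : F) (p q : MvPolynomial (Fin n) F) :
    rst i γ (p * q) = rst i γ p * rst i γ q := map_mul _ _ _

@[simp]
theorem rst_sub (i : Fin n) (γ : F) (p q : MvPolynomial (Fin n) F) :
    rst i γ (p - q) = rst i γ p - rst i γ q := map_sub _ _ _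

@[simp]
theorem rst_C (i : Fin n) (γ b : F) : rst i γ (C b : MvPolynomial (Fin n) F) = C b := by
  simp [rst]

@[simp]
theorem rst_X_self (i : Fin n) (γ : F) : rst i γ (X i : MvPolynomial (Fin n) F) = C γ := by
  simp [rst]

theorem rst_of_notMem_vars {i : Fin n} (γ : F) {p : MvPolynomial (Fin n) F}
    (hi : i ∉ p.vars) : rst i γ p = p :=
  hom_congr_vars (f₁ := (aeval fun k : Fin n => if k = i then C γ else X k).toRingHom)
    (f₂ := RingHom.id _) (p₁ := p) (p₂ := p) (by ext; simp)
    (fun k hk _ => by simp [show k ≠ i from fun e => hi (e ▸ hk)]) rfl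

theorem rst_C_mul_X_add_C_eq_zero {a : F} (ha : a ≠ 0) (b : F) (i : Fin n) :
    rst i (-(b / a)) (C a * X i + C b : MvPolynomial (Fin n) F) = 0 := by
  rw [rst_add, rst_mul, rst_C, rst_C, rst_X_self, ← map_mul, ← map_add,
    mul_neg, mul_div_cancel₀ b ha, neg_add_cancel, map_zero]

theorem rst_pder_C_mul_mul_add_C (i : Fin n) (γ a b : F) {f g : MvPolynomial (Fin n) F}
    {j : Fin n} (hj : j ∉ g.vars) :
    rst i γ (pder j (C a * (f * g) + C b)) = C a * (rst i γ (pder j f) * rst i γ g) := by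
  simp only [pder, rst_add, rst_mul, rst_C, rst_of_notMem_vars _ hj, rst_sub]
  ring

namespace IsMulROP

theorem vars_nonempty {p : MvPolynomial (Fin n) F} (hp : IsMulROP p) : p.vars.Nonempty := by
  induction hp with
  | leaf a b ha i => simp [vars_C_mul_add_C ha]
  | @mul a b ha f g _ _ _ ihf ihg =>
    have hf : f ≠ 0 := by rintro rfl; simp at ihf
    have hg : g ≠ 0 := by rintro rfl; simp at ihg
    rw [vars_C_mul_add_C ha, vars_mul_of_ne_zero hf hg]
    exact ihf.mono Finset.subset_union_left

theorem ne_zero {p : MvPolynomial (Fin n) F} (hp : IsMulROP p) : p ≠ 0 := by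
  rintro rfl
  simpa using hp.vars_nonempty

theorem vars_C_mul_mul_add_C {a : F} (ha : a ≠ 0) (b : F) {f g : MvPolynomial (Fin n) F}
    (hf : IsMulROP f) (hg : IsMulROP g) :
    (C a * (f * g) + C b).vars = f.vars ∪ g.vars := by
  rw [vars_C_mul_add_C ha, vars_mul_of_ne_zero hf.ne_zero hg.ne_zero]

theorem exists_rst_pder_node {a : F} (ha : a ≠ 0) (b : F) {f g : MvPolynomial (Fin n) F}
    (hf : IsMulROP f) (hg : IsMulROP g) (hdisj : Disjoint f.vars g.vars)
    {i : Fin n} (hi : i ∈ f.vars)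
    (ih : (∃ j ∈ f.vars, j ≠ i ∧ ∃ γ : F, rst i γ (pder j f) = 0) ∨
      ∃ a' b' : F, a' ≠ 0 ∧ f = C a' * X i + C b') :
    ∃ j ∈ (C a * (f * g) + C b).vars, j ≠ i ∧
      ∃ γ : F, rst i γ (pder j (C a * (f * g) + C b)) = 0 := by
  rw [vars_C_mul_mul_add_C ha b hf hg]
  rcases ih with ⟨j, hjf, hji, γ, hγ⟩ | ⟨a', b', ha', rfl⟩
  · refine ⟨j, Finset.mem_union_left _ hjf, hji, γ, ?_⟩
    rw [rst_pder_C_mul_mul_add_C i γ a b (Finset.disjoint_left.mp hdisj hjf), hγ,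
      zero_mul, mul_zero]
  · obtain ⟨j, hjg⟩ := hg.vars_nonempty
    have hji : j ≠ i := by rintro rfl; exact Finset.disjoint_left.mp hdisj hi hjg
    refine ⟨j, Finset.mem_union_right _ hjg, hji, -(b' / a'), ?_⟩
    rw [mul_comm _ g, rst_pder_C_mul_mul_add_C i _ a b (Finset.disjoint_right.mp hdisj hjg),
      rst_C_mul_X_add_C_eq_zero ha', mul_zero, mul_zero]

theorem exists_rst_pder_eq_zero_or_eq_C_mul_X_add_C {p : MvPolynomial (Fin n) F}
    (hp : IsMulROP p) {i : Fin n} (hi : i ∈ p.vars) :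
    (∃ j ∈ p.vars, j ≠ i ∧ ∃ γ : F, rst i γ (pder j p) = 0) ∨
      ∃ a b : F, a ≠ 0 ∧ p = C a * X i + C b := by
  induction hp with
  | leaf a b ha k =>
    rw [vars_C_mul_add_C ha, vars_X, Finset.mem_singleton] at hi
    exact Or.inr ⟨a, b, ha, by rw [hi]⟩
  | @mul a b ha f g hdisj hf hg ihf ihg =>
    rw [vars_C_mul_mul_add_C ha b hf hg, Finset.mem_union] at hi
    left
    rcases hi with hif | hig
    · exact exists_rst_pder_node ha b hf hg hdisj hif (ihf hif)
    · simpa only [mul_comm _ g] using exists_rst_pder_node ha b hg hf hdisj.symm hig (ihg hig)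

end IsMulROP

end

theorem stmt13 {F : Type*} [Field F] {n : ℕ} (g : MvPolynomial (Fin n) F)
    (hg : IsMulROP g) (hvars : 2 ≤ g.vars.card) (i : Fin n) (hi : i ∈ g.vars) :
    ∃ j ∈ g.vars, j ≠ i ∧ ∃ γ : F, rst i γ (pder j g) = 0 := by
  rcases hg.exists_rst_pder_eq_zero_or_eq_C_mul_X_add_C hi with h | ⟨a, b, ha, rfl⟩
  · exact h
  · rw [vars_C_mul_add_C ha, vars_X, Finset.card_singleton] at hvars
    omega
end
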